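/- Let G be a weighted concurrent game, D ⊆ Agt a set of deviators, and u ∈ [−W, W]^{4n} a threshold vector. For every state s ∈ Stat, Eve can ensure threshold u from the state (s, D) in the deviator game D(G) (for the multidimensional mean-payoff objective given by v, I and J) if, and only if, Eve can ensure threshold u from (s, D) in the fixed coalition game F(D, u) (for the multidimensional mean-payoff objective given by v^f, I and J). -/
import Mathlib


open Filter

section Defs

variable {Stat Agt Act : Type}

/-- A weighted concurrent game: finite sets of states/players/actions are imposed
via `Fintype` assumptions in the theorems. -/
structure CGame (Stat Agt Act : Type) where
  s0 : Stat
  Tab : Stat → (Agt → Act) → Stat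
  w : Agt → Stat → ℤ

/-- A history: an initial state followed by a finite alternating list of moves and states. -/
abbrev Hist (Stat Agt Act : Type) := Stat × List ((Agt → Act) × Stat)

abbrev Strategy (Stat Agt Act : Type) := Hist Stat Agt Act → Act

abbrev Profile (Stat Agt Act : Type) := Agt → Strategy Stat Agt Act

/-- A play: an infinite alternating sequence of states and moves. -/
structure Play (Stat Agt Act : Type) where
  state : ℕ → Stat
  move : ℕ → Agt → Act

/-- The prefix `ρ_{≤ m}` of a play: the history containing states `0..m` and moves `0..m-1`. -/
def Play.pref (ρ : Play Stat Agt Act) (m : ℕ) : Hist Stat Agt Act :=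
  (ρ.state 0, (List.range m).map fun j => (ρ.move j, ρ.state (j + 1)))

/-- `ρ` respects the transition function of `G` (it is a play of `G`). -/
def IsPlay (G : CGame Stat Agt Act) (ρ : Play Stat Agt Act) : Prop :=
  ∀ j, ρ.state (j + 1) = G.Tab (ρ.state j) (ρ.move j)

/-- The deviators from move `a` to move `a'`. -/
def devMove (a a' : Agt → Act) : Set Agt := {A | a A ≠ a' A}

/-- The deviators of a play with respect to a strategy profile. -/
def devPlay (σ : Profile Stat Agt Act) (ρ : Play Stat Agt Act) : Set Agt :=
  ⋃ i : ℕ, devMove (ρ.move i) fun A => σ A (ρ.pref i)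

/-- The deviators of the prefix `ρ_{≤ i}` with respect to a strategy profile. -/
def devPref (σ : Profile Stat Agt Act) (ρ : Play Stat Agt Act) (i : ℕ) : Set Agt :=
  ⋃ j ∈ Finset.range i, devMove (ρ.move j) fun A => σ A (ρ.pref j)

/-- A play is compatible with the strategy of coalition `C` (move condition). -/
def Compatible (C : Set Agt) (σ : Profile Stat Agt Act) (ρ : Play Stat Agt Act) : Prop :=
  ∀ j, ∀ A ∈ C, ρ.move j A = σ A (ρ.pref j)

/-- `Out_G(s, σ_C)`: plays of `G` starting at `s` compatible with `σ` on coalition `C`. -/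
def OutFrom (G : CGame Stat Agt Act) (s : Stat) (C : Set Agt) (σ : Profile Stat Agt Act) :
    Set (Play Stat Agt Act) :=
  {ρ | ρ.state 0 = s ∧ IsPlay G ρ ∧ Compatible C σ ρ}

open Classical in
/-- The profile `(σ_{-C}, σ'_C)`: agrees with `σ'` on `C` and with `σ` outside `C`. -/
noncomputable def combine (C : Set Agt) (σ σ' : Profile Stat Agt Act) : Profile Stat Agt Act :=
  fun A => if A ∈ C then σ' A else σ A

/-- Mean payoff of player `A` along a play. -/
noncomputable def payoffPlay (G : CGame Stat Agt Act) (A : Agt) (ρ : Play Stat Agt Act) : ℝ :=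
  Filter.liminf
    (fun m => (∑ l ∈ Finset.range (m + 1), (G.w A (ρ.state l) : ℝ)) / (m : ℝ)) Filter.atTop

def histLast (h : Hist Stat Agt Act) : Stat := (h.2.map Prod.snd).getLastD h.1

/-- The history of length `m+1` produced by the strategy profile `σ` from `s0`. -/
def outHist (G : CGame Stat Agt Act) (σ : Profile Stat Agt Act) : ℕ → Hist Stat Agt Act
  | 0 => (G.s0, [])
  | m + 1 =>
    let h := outHist G σ m
    (h.1, h.2 ++ [(fun A => σ A h, G.Tab (histLast h) fun A => σ A h)])

/-- The unique outcome of a full strategy profile from `s0`. -/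
def outcomePlay (G : CGame Stat Agt Act) (σ : Profile Stat Agt Act) : Play Stat Agt Act :=
  ⟨fun m => histLast (outHist G σ m), fun m A => σ A (outHist G σ m)⟩

/-- The payoff vector of a strategy profile. -/
noncomputable def payoffProfile (G : CGame Stat Agt Act) (σ : Profile Stat Agt Act) (A : Agt) :
    ℝ :=
  payoffPlay G A (outcomePlay G σ)

/-! The deviator game `D(G)`. -/

abbrev DState (Stat Agt : Type) := Stat × Set Agt

abbrev DHist (Stat Agt Act : Type) :=
  DState Stat Agt × List (((Agt → Act) × (Agt → Act)) × DState Stat Agt)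

abbrev EveStrategy (Stat Agt Act : Type) := DHist Stat Agt Act → Agt → Act

/-- A play of the deviator game: states together with Eve's and Adam's moves. -/
structure DPlay (Stat Agt Act : Type) where
  state : ℕ → DState Stat Agt
  eveMove : ℕ → Agt → Act
  adamMove : ℕ → Agt → Act

/-- Transition function of the deviator game. -/
def DTab (G : CGame Stat Agt Act) (q : DState Stat Agt) (a a' : Agt → Act) : DState Stat Agt :=
  (G.Tab q.1 a', q.2 ∪ devMove a a')

def DPlay.pref (ρ : DPlay Stat Agt Act) (m : ℕ) : DHist Stat Agt Act :=
  (ρ.state 0, (List.range m).map fun j => ((ρ.eveMove j, ρ.adamMove j), ρ.state (j + 1)))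

/-- Projection of a history of `D(G)` to a history of `G` (first state component, Adam's move). -/
def projHist (h : DHist Stat Agt Act) : Hist Stat Agt Act :=
  (h.1.1, h.2.map fun x => (x.1.2, x.2.1))

/-- Projection `π` of a play of `D(G)` to a play of `G`. -/
def projPlay (ρ : DPlay Stat Agt Act) : Play Stat Agt Act :=
  ⟨fun i => (ρ.state i).1, ρ.adamMove⟩

/-- The Eve strategy `π(σ_Agt)` associated with a strategy profile. -/
def eveOf (σ : Profile Stat Agt Act) : EveStrategy Stat Agt Act :=
  fun h A => σ A (projHist h)

/-- `δ(ρ)`: the limit of the deviator components along a play of `D(G)`. -/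
def delta (ρ : DPlay Stat Agt Act) : Set Agt := ⋃ i : ℕ, (ρ.state i).2

/-- Play of the deviator game from state `q` where Eve follows `σE` and Adam is unconstrained. -/
def IsDPlayFrom (G : CGame Stat Agt Act) (q : DState Stat Agt) (σE : EveStrategy Stat Agt Act)
    (ρ : DPlay Stat Agt Act) : Prop :=
  ρ.state 0 = q ∧
    ∀ j, ρ.eveMove j = σE (ρ.pref j) ∧
      ρ.state (j + 1) = DTab G (ρ.state j) (ρ.eveMove j) (ρ.adamMove j)

/-- Outcome of an Eve strategy from the initial state `(s0, ∅)` of `D(G)`. -/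
def IsOutcome (G : CGame Stat Agt Act) (σE : EveStrategy Stat Agt Act)
    (ρ : DPlay Stat Agt Act) : Prop :=
  IsDPlayFrom G (G.s0, ∅) σE ρ

/-- An Eve strategy is winning for objective `Ω` if all its outcomes belong to `Ω`. -/
def Winning (G : CGame Stat Agt Act) (σE : EveStrategy Stat Agt Act)
    (Ω : Set (DPlay Stat Agt Act)) : Prop :=
  ∀ ρ, IsOutcome G σE ρ → ρ ∈ Ω

/-- `σ` is `k`-resilient: `C`-resilient for every coalition `C` of size at most `k`. -/
def kResilient (G : CGame Stat Agt Act) (σ : Profile Stat Agt Act) (k : ℕ) : Prop :=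
  ∀ C : Set Agt, C.ncard ≤ k → ∀ σ' : Profile Stat Agt Act, ∀ A ∈ C,
    payoffProfile G (combine C σ σ') A ≤ payoffProfile G σ A

/-- `σ` is `(t,r)`-immune: `(C,r)`-immune for every coalition `C` of size at most `t`. -/
def tImmune (G : CGame Stat Agt Act) (σ : Profile Stat Agt Act) (t : ℕ) (r : ℝ) : Prop :=
  ∀ C : Set Agt, C.ncard ≤ t → ∀ σ' : Profile Stat Agt Act, ∀ A ∉ C,
    payoffProfile G σ A - r ≤ payoffProfile G (combine C σ σ') A

/-- The resilience objective `Re(k,p)`. -/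
def ReObj (G : CGame Stat Agt Act) (k : ℕ) (p : Agt → ℝ) : Set (DPlay Stat Agt Act) :=
  {ρ | k < (delta ρ).ncard} ∪
    {ρ | (delta ρ).ncard = k ∧ ∀ A ∈ delta ρ, payoffPlay G A (projPlay ρ) ≤ p A} ∪
    {ρ | (delta ρ).ncard < k ∧ ∀ A : Agt, payoffPlay G A (projPlay ρ) ≤ p A}

/-- The immunity objective `I(t,r,p)`. -/
def ImmObj (G : CGame Stat Agt Act) (t : ℕ) (r : ℝ) (p : Agt → ℝ) : Set (DPlay Stat Agt Act) :=
  {ρ | t < (delta ρ).ncard} ∪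
    {ρ | ∀ A ∉ delta ρ, p A - r ≤ payoffPlay G A (projPlay ρ)}

/-- Mean payoff (liminf) of a weight function on states of `D(G)` along a play. -/
noncomputable def MP (u : DState Stat Agt → ℤ) (ρ : DPlay Stat Agt Act) : ℝ :=
  Filter.liminf
    (fun m => (∑ l ∈ Finset.range (m + 1), (u (ρ.state l) : ℝ)) / (m : ℝ)) Filter.atTop

/-- Mean payoff (limsup) of a weight function on states of `D(G)` along a play. -/
noncomputable def MPSup (u : DState Stat Agt → ℤ) (ρ : DPlay Stat Agt Act) : ℝ :=
  Filter.limsup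
    (fun m => (∑ l ∈ Finset.range (m + 1), (u (ρ.state l) : ℝ)) / (m : ℝ)) Filter.atTop

end Defs

section Weights

variable {Stat Act : Type} {n : ℕ}

/-- `W`: the maximal absolute value of the weights. -/
noncomputable def Wmax (G : CGame Stat (Fin n) Act) [Fintype Stat] : ℤ :=
  ((Finset.univ : Finset (Fin n × Stat)).sup fun x => (G.w x.1 x.2).natAbs : ℕ)

open Classical in
/-- Dimension `i` (for `i ∈ [1,n]`) of the weight function `v`, used for immunity. -/
noncomputable def vImm (G : CGame Stat (Fin n) Act) [Fintype Stat] (t : ℕ) (i : Fin n)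
    (q : DState Stat (Fin n)) : ℤ :=
  if q.2.ncard ≤ t ∧ i ∉ q.2 then G.w i q.1 else Wmax G

open Classical in
/-- Dimension `n + i` of the weight function `v`, used for resilience. -/
noncomputable def vRes (G : CGame Stat (Fin n) Act) [Fintype Stat] (k : ℕ) (i : Fin n)
    (q : DState Stat (Fin n)) : ℤ :=
  if q.2.ncard < k ∨ (q.2.ncard = k ∧ i ∈ q.2) then -(G.w i q.1) else Wmax G

open Classical in
/-- Dimension `2n + i` of the weight function `v`, constraining the payoff with no deviation. -/
noncomputable def vPay (G : CGame Stat (Fin n) Act) [Fintype Stat] (i : Fin n)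
    (q : DState Stat (Fin n)) : ℤ :=
  if q.2 = ∅ then G.w i q.1 else Wmax G

open Classical in
/-- Dimension `3n + i` of the weight function `v`, constraining the payoff with no deviation. -/
noncomputable def vPayNeg (G : CGame Stat (Fin n) Act) [Fintype Stat] (i : Fin n)
    (q : DState Stat (Fin n)) : ℤ :=
  if q.2 = ∅ then -(G.w i q.1) else Wmax G

end Weights

section Fixed

variable {Stat Act : Type} {n : ℕ}

/-- Play from `q` under an arbitrary transition function, Eve following `σE`. -/
def IsTabPlayFrom
    (tab : DState Stat (Fin n) → (Fin n → Act) → (Fin n → Act) → DState Stat (Fin n))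
    (q : DState Stat (Fin n)) (σE : EveStrategy Stat (Fin n) Act)
    (ρ : DPlay Stat (Fin n) Act) : Prop :=
  ρ.state 0 = q ∧
    ∀ j, ρ.eveMove j = σE (ρ.pref j) ∧
      ρ.state (j + 1) = tab (ρ.state j) (ρ.eveMove j) (ρ.adamMove j)

/-- Eve can ensure, from state `q` in the game with transition `tab`, the threshold given
by `ui, ur, up, upn` for the multidimensional mean-payoff objective with weights
`vi` (liminf, dims `[1,n]`), `vr` (limsup, dims `[n+1,2n]`), `vp` (liminf, dims `[2n+1,3n]`)
and `vpn` (limsup, dims `[3n+1,4n]`). -/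
def EnsuresFrom
    (tab : DState Stat (Fin n) → (Fin n → Act) → (Fin n → Act) → DState Stat (Fin n))
    (q : DState Stat (Fin n)) (vi vr vp vpn : Fin n → DState Stat (Fin n) → ℤ)
    (ui ur up upn : Fin n → ℝ) : Prop :=
  ∃ σE : EveStrategy Stat (Fin n) Act, ∀ ρ : DPlay Stat (Fin n) Act,
    IsTabPlayFrom tab q σE ρ →
      ∀ i : Fin n,
        ui i ≤ MP (vi i) ρ ∧ ur i ≤ MPSup (vr i) ρ ∧
        up i ≤ MP (vp i) ρ ∧ upn i ≤ MPSup (vpn i) ρ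

open Classical in
/-- Transition function of the fixed coalition game `F(D,u)`: as in `D(G)` on `Stat × {D}`,
self-loops on the other states. -/
noncomputable def FTab (G : CGame Stat (Fin n) Act) (D : Set (Fin n)) (q : DState Stat (Fin n))
    (a a' : Fin n → Act) : DState Stat (Fin n) :=
  if q.2 = D then DTab G q a a' else q

/-- Eve can ensure the threshold `u` from `q` in the deviator game `D(G)`. -/
def WinState (G : CGame Stat (Fin n) Act) [Fintype Stat] (k t : ℕ)
    (ui ur up upn : Fin n → ℝ) (q : DState Stat (Fin n)) : Prop :=
  EnsuresFrom (DTab G) q (vImm G t) (vRes G k) (vPay G) (vPayNeg G) ui ur up upn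

open Classical in
/-- The weight function `v^f` of the fixed coalition game: agrees with the base weight on
`Stat × {D}`, is `W` on winning successor states and `-W-1` on losing ones. -/
noncomputable def vf (G : CGame Stat (Fin n) Act) [Fintype Stat] (D : Set (Fin n))
    (base : DState Stat (Fin n) → ℤ) (win : DState Stat (Fin n) → Prop)
    (q : DState Stat (Fin n)) : ℤ :=
  if q.2 = D then base q else if win q then Wmax G else -(Wmax G) - 1

end Fixed

noncomputable def avgSeq (a : ℕ → ℝ) (m : ℕ) : ℝ := (∑ l ∈ Finset.range (m+1), a l) / m

lemma avgSeq_abs_le {a : ℕ → ℝ} {B : ℝ} (hB : ∀ l, |a l| ≤ B) {m : ℕ} (hm : 1 ≤ m) :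
    |avgSeq a m| ≤ 2*B := by
  have hB0 : 0 ≤ B := le_trans (abs_nonneg _) (hB 0)
  have h1 : |∑ l ∈ Finset.range (m+1), a l| ≤ (m+1 : ℝ) * B := by
    calc |∑ l ∈ Finset.range (m+1), a l| ≤ ∑ l ∈ Finset.range (m+1), |a l| :=
          Finset.abs_sum_le_sum_abs _ _
      _ ≤ ∑ _l ∈ Finset.range (m+1), B := Finset.sum_le_sum fun l _ => hB l
      _ = (m+1 : ℝ) * B := by rw [Finset.sum_const, Finset.card_range, nsmul_eq_mul]; push_cast; ring
  have hm' : (1:ℝ) ≤ m := by exact_mod_cast hm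
  have hm0 : (0:ℝ) < m := by linarith
  rw [avgSeq, abs_div, abs_of_pos hm0, div_le_iff₀ hm0]
  nlinarith

lemma bddAboveU {f : ℕ → ℝ} {C : ℝ} (h : ∀ᶠ m in atTop, |f m| ≤ C) :
    IsBoundedUnder (· ≤ ·) atTop f :=
  isBoundedUnder_of_eventually_le (a := C) (by filter_upwards [h] with m hm using (abs_le.mp hm).2)

lemma bddBelowU {f : ℕ → ℝ} {C : ℝ} (h : ∀ᶠ m in atTop, |f m| ≤ C) :
    IsBoundedUnder (· ≥ ·) atTop f :=
  isBoundedUnder_of_eventually_ge (a := -C) (by filter_upwards [h] with m hm using (abs_le.mp hm).1)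

lemma liminf_eq_of_tendsto_sub_aux {f g : ℕ → ℝ} {C : ℝ}
    (hf : ∀ᶠ m in atTop, |f m| ≤ C) (hg : ∀ᶠ m in atTop, |g m| ≤ C)
    (h : Tendsto (fun m => f m - g m) atTop (nhds 0)) :
    liminf f atTop ≤ liminf g atTop := by
  refine le_of_forall_pos_le_add fun ε hε => ?_
  have hev : ∀ᶠ m in atTop, f m ≤ g m + ε := by
    filter_upwards [h.eventually (gt_mem_nhds hε)] with m hm
    linarith
  have hgε : ∀ᶠ m in atTop, |g m + ε| ≤ C + ε := by
    filter_upwards [hg] with m hm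
    have := abs_le.mp hm; rw [abs_le]; constructor <;> linarith [hε.le]
  have h1 : liminf f atTop ≤ liminf (fun m => g m + ε) atTop :=
    liminf_le_liminf hev (bddBelowU hf) (bddAboveU hgε).isCoboundedUnder_ge
  rwa [liminf_add_const atTop g ε (bddAboveU hg).isCoboundedUnder_ge (bddBelowU hg)] at h1

lemma liminf_eq_of_tendsto_sub {f g : ℕ → ℝ} {C : ℝ}
    (hf : ∀ᶠ m in atTop, |f m| ≤ C) (hg : ∀ᶠ m in atTop, |g m| ≤ C)
    (h : Tendsto (fun m => f m - g m) atTop (nhds 0)) :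
    liminf f atTop = liminf g atTop := by
  refine le_antisymm (liminf_eq_of_tendsto_sub_aux hf hg h)
    (liminf_eq_of_tendsto_sub_aux hg hf ?_)
  have := h.neg
  simp only [neg_sub, neg_zero] at this
  exact this

lemma limsup_eq_of_tendsto_sub_aux {f g : ℕ → ℝ} {C : ℝ}
    (hf : ∀ᶠ m in atTop, |f m| ≤ C) (hg : ∀ᶠ m in atTop, |g m| ≤ C)
    (h : Tendsto (fun m => f m - g m) atTop (nhds 0)) :
    limsup f atTop ≤ limsup g atTop := by
  refine le_of_forall_pos_le_add fun ε hε => ?_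
  have hev : ∀ᶠ m in atTop, f m ≤ g m + ε := by
    filter_upwards [h.eventually (gt_mem_nhds hε)] with m hm
    linarith
  have hgε : ∀ᶠ m in atTop, |g m + ε| ≤ C + ε := by
    filter_upwards [hg] with m hm
    have := abs_le.mp hm; rw [abs_le]; constructor <;> linarith [hε.le]
  have h1 : limsup f atTop ≤ limsup (fun m => g m + ε) atTop :=
    limsup_le_limsup hev (bddBelowU hf).isCoboundedUnder_le (bddAboveU hgε)
  rwa [limsup_add_const atTop g ε (bddAboveU hg) (bddBelowU hg).isCoboundedUnder_le] at h1

lemma limsup_eq_of_tendsto_sub {f g : ℕ → ℝ} {C : ℝ}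
    (hf : ∀ᶠ m in atTop, |f m| ≤ C) (hg : ∀ᶠ m in atTop, |g m| ≤ C)
    (h : Tendsto (fun m => f m - g m) atTop (nhds 0)) :
    limsup f atTop = limsup g atTop := by
  refine le_antisymm (limsup_eq_of_tendsto_sub_aux hf hg h)
    (limsup_eq_of_tendsto_sub_aux hg hf ?_)
  have := h.neg
  simp only [neg_sub, neg_zero] at this
  exact this

example (a : ℕ → ℝ) (N m : ℕ) :
    ∑ l ∈ Finset.range (m+N+1), a l
      = (∑ l ∈ Finset.range N, a l) + ∑ l ∈ Finset.range (m+1), a (l+N) := by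
  have h : m+N+1 = N + (m+1) := by ring
  rw [h, Finset.sum_range_add]
  simp [Nat.add_comm]

lemma avg_shift_diff {a : ℕ → ℝ} {B : ℝ} (hB : ∀ l, |a l| ≤ B) (N : ℕ) :
    Tendsto (fun m => avgSeq a (m+N) - avgSeq (fun l => a (l+N)) m) atTop (nhds 0) := by
  set b := fun l => a (l+N) with hb
  set c := ∑ l ∈ Finset.range N, a l with hc
  have hBb : ∀ l, |b l| ≤ B := fun l => hB (l+N)
  have key : ∀ m : ℕ, 1 ≤ m →
      avgSeq a (m+N) - avgSeq b m = c/(m+N) - avgSeq b m * (N/(m+N)) := by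
    intro m hm
    have hsum : ∑ l ∈ Finset.range (m+N+1), a l = c + ∑ l ∈ Finset.range (m+1), b l := by
      have h : m+N+1 = N + (m+1) := by ring
      rw [h, Finset.sum_range_add, hc]
      simp [hb, Nat.add_comm]
    have hm0 : (0:ℝ) < m := by exact_mod_cast hm
    have hmN : (0:ℝ) < (m:ℝ)+N := by positivity
    unfold avgSeq
    rw [hsum]
    push_cast
    field_simp
    ring
  have hbound : ∀ᶠ m in atTop, ‖avgSeq a (m+N) - avgSeq b m‖ ≤ (|c| + 2*B*N)/m := by
    filter_upwards [eventually_ge_atTop 1] with m hm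
    rw [key m hm]
    have hm0 : (1:ℝ) ≤ m := by exact_mod_cast hm
    have hmN : (0:ℝ) < (m:ℝ)+N := by positivity
    have havg := avgSeq_abs_le hBb hm
    have hB0 : 0 ≤ B := le_trans (abs_nonneg _) (hB 0)
    have h1 : |c/((m:ℝ)+N)| ≤ |c|/m := by
      rw [abs_div, abs_of_pos hmN]
      apply div_le_div₀ (abs_nonneg c) le_rfl (by linarith) (by push_cast; linarith [Nat.cast_nonneg (α := ℝ) N])
    have h2 : |avgSeq b m * ((N:ℝ)/((m:ℝ)+N))| ≤ 2*B*N/m := by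
      rw [abs_mul, abs_div, abs_of_pos hmN, abs_of_nonneg (Nat.cast_nonneg (α := ℝ) N)]
      have hNm : (N:ℝ)/((m:ℝ)+N) ≤ (N:ℝ)/m := by
        apply div_le_div₀ (Nat.cast_nonneg _) le_rfl (by linarith) (by linarith [Nat.cast_nonneg (α := ℝ) N])
      calc |avgSeq b m| * ((N:ℝ)/((m:ℝ)+N)) ≤ (2*B) * ((N:ℝ)/m) := by
            apply mul_le_mul havg hNm (by positivity) (by linarith)
        _ = 2*B*N/m := by ring
    calc ‖c/((m:ℝ)+N) - avgSeq b m * ((N:ℝ)/((m:ℝ)+N))‖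
        ≤ |c/((m:ℝ)+N)| + |avgSeq b m * ((N:ℝ)/((m:ℝ)+N))| := abs_sub _ _
      _ ≤ |c|/m + 2*B*N/m := add_le_add h1 h2
      _ = (|c| + 2*B*N)/m := by ring
  exact squeeze_zero_norm' hbound (tendsto_const_div_atTop_nhds_zero_nat _)
lemma liminf_avgSeq_shift {a : ℕ → ℝ} {B : ℝ} (hB : ∀ l, |a l| ≤ B) (N : ℕ) :
    liminf (avgSeq fun l => a (l+N)) atTop = liminf (avgSeq a) atTop := by
  have h1 : liminf (avgSeq a) atTop = liminf (fun m => avgSeq a (m+N)) atTop :=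
    (liminf_nat_add (avgSeq a) N).symm
  rw [h1]
  have hf : ∀ᶠ m in atTop, |avgSeq a (m+N)| ≤ 2*B := by
    filter_upwards [eventually_ge_atTop 1] with m hm
    exact avgSeq_abs_le hB (Nat.le_add_right_of_le hm)
  have hg : ∀ᶠ m in atTop, |avgSeq (fun l => a (l+N)) m| ≤ 2*B := by
    filter_upwards [eventually_ge_atTop 1] with m hm
    exact avgSeq_abs_le (fun l => hB (l+N)) hm
  exact (liminf_eq_of_tendsto_sub hf hg (avg_shift_diff hB N)).symm

lemma limsup_avgSeq_shift {a : ℕ → ℝ} {B : ℝ} (hB : ∀ l, |a l| ≤ B) (N : ℕ) :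
    limsup (avgSeq fun l => a (l+N)) atTop = limsup (avgSeq a) atTop := by
  have h1 : limsup (avgSeq a) atTop = limsup (fun m => avgSeq a (m+N)) atTop :=
    (limsup_nat_add (avgSeq a) N).symm
  rw [h1]
  have hf : ∀ᶠ m in atTop, |avgSeq a (m+N)| ≤ 2*B := by
    filter_upwards [eventually_ge_atTop 1] with m hm
    exact avgSeq_abs_le hB (Nat.le_add_right_of_le hm)
  have hg : ∀ᶠ m in atTop, |avgSeq (fun l => a (l+N)) m| ≤ 2*B := by
    filter_upwards [eventually_ge_atTop 1] with m hm
    exact avgSeq_abs_le (fun l => hB (l+N)) hm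
  exact (limsup_eq_of_tendsto_sub hf hg (avg_shift_diff hB N)).symm

lemma tendsto_avgSeq_const (c : ℝ) : Tendsto (avgSeq fun _ => c) atTop (nhds c) := by
  have heq : ∀ᶠ m in atTop, c + c/m = avgSeq (fun _ => c) m := by
    filter_upwards [eventually_ge_atTop 1] with m hm
    have hm0 : (0:ℝ) < m := by exact_mod_cast hm
    rw [avgSeq, Finset.sum_const, Finset.card_range, nsmul_eq_mul]
    push_cast
    field_simp
  have h : Tendsto (fun m : ℕ => c + c/m) atTop (nhds (c + 0)) :=
    tendsto_const_nhds.add (tendsto_const_div_atTop_nhds_zero_nat c)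
  rw [add_zero] at h
  exact h.congr' heq

lemma avgSeq_const_tail {a : ℕ → ℝ} {B : ℝ} (hB : ∀ l, |a l| ≤ B) {N : ℕ} {c : ℝ}
    (h : ∀ l, a (l+N) = c) :
    liminf (avgSeq a) atTop = c ∧ limsup (avgSeq a) atTop = c := by
  have hfun : (fun l => a (l+N)) = fun _ => c := funext h
  constructor
  · rw [← liminf_avgSeq_shift hB N, hfun]
    exact (tendsto_avgSeq_const c).liminf_eq
  · rw [← limsup_avgSeq_shift hB N, hfun]
    exact (tendsto_avgSeq_const c).limsup_eq
section GameHelpers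
open Filter
variable {Stat Agt Act : Type}

def DPlay.shift (ρ : DPlay Stat Agt Act) (N : ℕ) : DPlay Stat Agt Act :=
  ⟨fun l => ρ.state (l+N), fun l => ρ.eveMove (l+N), fun l => ρ.adamMove (l+N)⟩

lemma MP_avg (u : DState Stat Agt → ℤ) (ρ : DPlay Stat Agt Act) :
    MP u ρ = liminf (avgSeq fun l => (u (ρ.state l) : ℝ)) atTop := rfl

lemma MPSup_avg (u : DState Stat Agt → ℤ) (ρ : DPlay Stat Agt Act) :
    MPSup u ρ = limsup (avgSeq fun l => (u (ρ.state l) : ℝ)) atTop := rfl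

lemma MP_congr {u u' : DState Stat Agt → ℤ} {ρ ρ' : DPlay Stat Agt Act}
    (h : ∀ l, u (ρ.state l) = u' (ρ'.state l)) : MP u ρ = MP u' ρ' := by
  rw [MP_avg, MP_avg]
  have hfun : (fun l => (u (ρ.state l) : ℝ)) = fun l => (u' (ρ'.state l) : ℝ) :=
    funext fun l => by rw [h l]
  rw [hfun]

lemma MPSup_congr {u u' : DState Stat Agt → ℤ} {ρ ρ' : DPlay Stat Agt Act}
    (h : ∀ l, u (ρ.state l) = u' (ρ'.state l)) : MPSup u ρ = MPSup u' ρ' := by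
  rw [MPSup_avg, MPSup_avg]
  have hfun : (fun l => (u (ρ.state l) : ℝ)) = fun l => (u' (ρ'.state l) : ℝ) :=
    funext fun l => by rw [h l]
  rw [hfun]

lemma MP_shift {u : DState Stat Agt → ℤ} {B : ℝ} (hB : ∀ q, |(u q : ℝ)| ≤ B)
    (ρ : DPlay Stat Agt Act) (N : ℕ) : MP u (ρ.shift N) = MP u ρ := by
  rw [MP_avg, MP_avg]
  exact liminf_avgSeq_shift (a := fun l => (u (ρ.state l) : ℝ)) (fun l => hB _) N

lemma MPSup_shift {u : DState Stat Agt → ℤ} {B : ℝ} (hB : ∀ q, |(u q : ℝ)| ≤ B)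
    (ρ : DPlay Stat Agt Act) (N : ℕ) : MPSup u (ρ.shift N) = MPSup u ρ := by
  rw [MPSup_avg, MPSup_avg]
  exact limsup_avgSeq_shift (a := fun l => (u (ρ.state l) : ℝ)) (fun l => hB _) N

lemma MP_const_tail {u : DState Stat Agt → ℤ} {B : ℝ} (hB : ∀ q, |(u q : ℝ)| ≤ B)
    {ρ : DPlay Stat Agt Act} {N : ℕ} {q' : DState Stat Agt}
    (h : ∀ l, ρ.state (l+N) = q') :
    MP u ρ = (u q' : ℝ) ∧ MPSup u ρ = (u q' : ℝ) := by
  rw [MP_avg, MPSup_avg]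
  exact avgSeq_const_tail (fun l => hB _) (fun l => by rw [h l])

/-- prefixes agree when the plays agree up to the given length -/
lemma pref_congr {ρ₁ ρ₂ : DPlay Stat Agt Act} {j : ℕ}
    (hs : ∀ l ≤ j, ρ₁.state l = ρ₂.state l)
    (he : ∀ l < j, ρ₁.eveMove l = ρ₂.eveMove l)
    (ha : ∀ l < j, ρ₁.adamMove l = ρ₂.adamMove l) : ρ₁.pref j = ρ₂.pref j := by
  unfold DPlay.pref
  refine Prod.ext (hs 0 (Nat.zero_le _)) ?_
  refine List.map_congr_left fun l hl => ?_
  rw [List.mem_range] at hl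
  rw [hs (l+1) hl, he l hl, ha l hl]

lemma pref_snd_length (ρ : DPlay Stat Agt Act) (N : ℕ) : (ρ.pref N).2.length = N := by
  simp [DPlay.pref]

lemma pref_add (ρ : DPlay Stat Agt Act) (N l : ℕ) :
    ρ.pref (N + l) = (ρ.state 0, (ρ.pref N).2 ++ ((ρ.shift N).pref l).2) := by
  unfold DPlay.pref DPlay.shift
  refine Prod.ext rfl ?_
  simp only [List.range_add, List.map_append, List.map_map]
  congr 1
  refine List.map_congr_left fun j _ => ?_
  simp only [Function.comp_apply]
  have e2 : N + j + 1 = j + 1 + N := by omega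
  have e1 : N + j = j + N := by omega
  rw [e2, e1]

lemma pref_states (ρ : DPlay Stat Agt Act) (j : ℕ) :
    (ρ.pref j).1 :: (ρ.pref j).2.map Prod.snd = (List.range (j+1)).map ρ.state := by
  rw [List.range_succ_eq_map]
  unfold DPlay.pref
  simp [List.map_map, Function.comp]

end GameHelpers
section WB
open Filter
variable {Stat Act : Type} {n : ℕ} [Fintype Stat]

lemma Wmax_nonneg (G : CGame Stat (Fin n) Act) : (0:ℝ) ≤ (Wmax G : ℝ) := by
  unfold Wmax; positivity

lemma abs_w_le (G : CGame Stat (Fin n) Act) (i : Fin n) (s : Stat) :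
    |(G.w i s : ℝ)| ≤ (Wmax G : ℝ) := by
  have h : (G.w i s).natAbs ≤ (Finset.univ.sup fun x : Fin n × Stat => (G.w x.1 x.2).natAbs) :=
    Finset.le_sup (f := fun x : Fin n × Stat => (G.w x.1 x.2).natAbs) (Finset.mem_univ (i, s))
  rw [← Int.cast_abs, Int.abs_eq_natAbs]
  unfold Wmax
  exact_mod_cast h

lemma abs_vImm_le (G : CGame Stat (Fin n) Act) (t : ℕ) (i : Fin n) (q : DState Stat (Fin n)) :
    |(vImm G t i q : ℝ)| ≤ (Wmax G : ℝ) := by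
  unfold vImm
  split
  · exact abs_w_le G i q.1
  · rw [abs_of_nonneg (Wmax_nonneg G)]

lemma abs_vRes_le (G : CGame Stat (Fin n) Act) (k : ℕ) (i : Fin n) (q : DState Stat (Fin n)) :
    |(vRes G k i q : ℝ)| ≤ (Wmax G : ℝ) := by
  unfold vRes
  split
  · rw [Int.cast_neg, abs_neg]; exact abs_w_le G i q.1
  · rw [abs_of_nonneg (Wmax_nonneg G)]

lemma abs_vPay_le (G : CGame Stat (Fin n) Act) (i : Fin n) (q : DState Stat (Fin n)) :
    |(vPay G i q : ℝ)| ≤ (Wmax G : ℝ) := by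
  unfold vPay
  split
  · exact abs_w_le G i q.1
  · rw [abs_of_nonneg (Wmax_nonneg G)]

lemma abs_vPayNeg_le (G : CGame Stat (Fin n) Act) (i : Fin n) (q : DState Stat (Fin n)) :
    |(vPayNeg G i q : ℝ)| ≤ (Wmax G : ℝ) := by
  unfold vPayNeg
  split
  · rw [Int.cast_neg, abs_neg]; exact abs_w_le G i q.1
  · rw [abs_of_nonneg (Wmax_nonneg G)]

lemma abs_vf_le (G : CGame Stat (Fin n) Act) (D : Set (Fin n))
    {base : DState Stat (Fin n) → ℤ} (win : DState Stat (Fin n) → Prop)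
    (hbase : ∀ q, |(base q : ℝ)| ≤ (Wmax G : ℝ)) (q : DState Stat (Fin n)) :
    |(vf G D base win q : ℝ)| ≤ (Wmax G : ℝ) + 1 := by
  unfold vf
  split
  · exact le_trans (hbase q) (by linarith)
  split
  · rw [abs_of_nonneg (Wmax_nonneg G)]; linarith
  · push_cast
    rw [abs_of_nonpos (by linarith [Wmax_nonneg G])]
    push_cast
    linarith

end WB

lemma getD_map_range {α : Type*} (f : ℕ → α) {m l : ℕ} (h : l < m) (d : α) :
    ((List.range m).map f).getD l d = f l := by
  rw [List.getD_eq_getElem _ _ (by simpa using h)]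
  simp
section Strats
variable {Stat Act : Type} {n : ℕ}

noncomputable def buildHist (τ : EveStrategy Stat (Fin n) Act) (st : ℕ → DState Stat (Fin n))
    (adam : ℕ → Fin n → Act) (base : ℕ → Fin n → Act) (m₀ : ℕ) :
    ℕ → List (((Fin n → Act) × (Fin n → Act)) × DState Stat (Fin n))
  | 0 => []
  | j+1 => buildHist τ st adam base m₀ j ++
      [((if j < m₀ then base j else τ (st 0, buildHist τ st adam base m₀ j), adam j), st (j+1))]

noncomputable def eveF (τ : EveStrategy Stat (Fin n) Act) (st : ℕ → DState Stat (Fin n))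
    (adam : ℕ → Fin n → Act) (base : ℕ → Fin n → Act) (m₀ : ℕ) (j : ℕ) : Fin n → Act :=
  if j < m₀ then base j else τ (st 0, buildHist τ st adam base m₀ j)

lemma buildHist_eq (τ : EveStrategy Stat (Fin n) Act) (st : ℕ → DState Stat (Fin n))
    (adam : ℕ → Fin n → Act) (base : ℕ → Fin n → Act) (m₀ : ℕ) (j : ℕ) :
    buildHist τ st adam base m₀ j
      = (List.range j).map fun l => ((eveF τ st adam base m₀ l, adam l), st (l+1)) := by
  induction j with
  | zero => rfl
  | succ j ih =>
    rw [buildHist, List.range_succ, List.map_append, ← ih]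
    rfl

open Classical in
noncomputable def backStrat (D : Set (Fin n)) (τ : EveStrategy Stat (Fin n) Act)
    (σw : DState Stat (Fin n) → EveStrategy Stat (Fin n) Act) : EveStrategy Stat (Fin n) Act :=
  fun h =>
    if hb : ∃ j, j < (h.1 :: h.2.map Prod.snd).length ∧ ((h.1 :: h.2.map Prod.snd).getD j h.1).2 ≠ D then
      σw ((h.1 :: h.2.map Prod.snd).getD (Nat.find hb) h.1)
        (((h.1 :: h.2.map Prod.snd).getD (Nat.find hb) h.1), h.2.drop (Nat.find hb))
    else τ h

lemma backStrat_eval_good (D : Set (Fin n)) (τ : EveStrategy Stat (Fin n) Act)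
    (σw : DState Stat (Fin n) → EveStrategy Stat (Fin n) Act)
    (ρ : DPlay Stat (Fin n) Act) (j : ℕ) (hg : ∀ l ≤ j, (ρ.state l).2 = D) :
    backStrat D τ σw (ρ.pref j) = τ (ρ.pref j) := by
  rw [backStrat]
  rw [dif_neg]
  rintro ⟨l, hl, hbad⟩
  rw [pref_states] at hl hbad
  rw [List.length_map, List.length_range] at hl
  rw [getD_map_range ρ.state hl] at hbad
  exact hbad (hg l (Nat.lt_succ_iff.mp hl))

lemma backStrat_eval_bad (D : Set (Fin n)) (τ : EveStrategy Stat (Fin n) Act)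
    (σw : DState Stat (Fin n) → EveStrategy Stat (Fin n) Act)
    (ρ : DPlay Stat (Fin n) Act) (m₀ l : ℕ) (hm : (ρ.state m₀).2 ≠ D)
    (hmin : ∀ l' < m₀, (ρ.state l').2 = D) :
    backStrat D τ σw (ρ.pref (m₀ + l)) = σw (ρ.state m₀) ((ρ.shift m₀).pref l) := by
  classical
  rw [backStrat]
  have hlen : (((ρ.pref (m₀+l)).1 :: (ρ.pref (m₀+l)).2.map Prod.snd)).length = m₀ + l + 1 := by
    rw [pref_states, List.length_map, List.length_range]
  have hget : ∀ l' < m₀ + l + 1,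
      ((ρ.pref (m₀+l)).1 :: (ρ.pref (m₀+l)).2.map Prod.snd).getD l' (ρ.pref (m₀+l)).1
        = ρ.state l' := by
    intro l' hl'
    rw [pref_states, getD_map_range ρ.state hl']
  have hex : ∃ j, j < (((ρ.pref (m₀+l)).1 :: (ρ.pref (m₀+l)).2.map Prod.snd)).length ∧
      ((((ρ.pref (m₀+l)).1 :: (ρ.pref (m₀+l)).2.map Prod.snd)).getD j (ρ.pref (m₀+l)).1).2 ≠ D := by
    refine ⟨m₀, ?_, ?_⟩
    · rw [hlen]; omega
    · rw [hget m₀ (by omega)]; exact hm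
  rw [dif_pos hex]
  have hfind : Nat.find hex = m₀ := by
    rw [Nat.find_eq_iff]
    refine ⟨⟨by rw [hlen]; omega, by rw [hget m₀ (by omega)]; exact hm⟩, ?_⟩
    rintro j hj ⟨hj1, hj2⟩
    rw [hlen] at hj1
    rw [hget j (by omega)] at hj2
    exact hj2 (hmin j hj)
  rw [hfind, hget m₀ (by omega)]
  have hdrop : (ρ.pref (m₀+l)).2.drop m₀ = ((ρ.shift m₀).pref l).2 := by
    rw [pref_add]
    exact List.drop_left' (pref_snd_length ρ m₀)
  rw [hdrop]
  have hfst : (ρ.shift m₀).state 0 = ρ.state m₀ := by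
    show ρ.state (0 + m₀) = ρ.state m₀
    rw [Nat.zero_add]
  congr 1
  rw [← hfst]
  rfl

end Strats
theorem statement12 {Stat Act : Type} {n : ℕ} [Fintype Stat] [Fintype Act]
    (G : CGame Stat (Fin n) Act) (k t : ℕ) (D : Set (Fin n))
    (ui ur up upn : Fin n → ℝ)
    (hu : ∀ i : Fin n,
      |ui i| ≤ (Wmax G : ℝ) ∧ |ur i| ≤ (Wmax G : ℝ) ∧
      |up i| ≤ (Wmax G : ℝ) ∧ |upn i| ≤ (Wmax G : ℝ)) :
    ∀ s : Stat,
      EnsuresFrom (DTab G) (s, D) (vImm G t) (vRes G k) (vPay G) (vPayNeg G) ui ur up upn ↔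
        EnsuresFrom (FTab G D) (s, D)
          (fun i => vf G D (vImm G t i) (WinState G k t ui ur up upn))
          (fun i => vf G D (vRes G k i) (WinState G k t ui ur up upn))
          (fun i => vf G D (vPay G i) (WinState G k t ui ur up upn))
          (fun i => vf G D (vPayNeg G i) (WinState G k t ui ur up upn)) ui ur up upn := by
  intro s
  rcases Nat.eq_zero_or_pos n with hn | hn
  · subst hn
    constructor <;> rintro ⟨σE, -⟩ <;> exact ⟨σE, fun ρ _ i => i.elim0⟩
  constructor
  · -- forward direction
    rintro ⟨σE, hσ⟩
    refine ⟨σE, fun ρ hρ => ?_⟩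
    obtain ⟨hρ0, hρstep⟩ := hρ
    by_cases hbad : ∃ j, (ρ.state j).2 ≠ D
    · -- a deviation occurs
      classical
      have h0D : (ρ.state 0).2 = D := by rw [hρ0]
      set m₀ := Nat.find hbad with hm₀def
      have hm₀ : (ρ.state m₀).2 ≠ D := Nat.find_spec hbad
      have hmin : ∀ j < m₀, (ρ.state j).2 = D := fun j hj => not_not.mp (Nat.find_min hbad hj)
      have hm₀pos : 0 < m₀ := Nat.pos_of_ne_zero (fun h => hm₀ (h ▸ h0D))
      set q' := ρ.state m₀ with hq'
      have hconst : ∀ l, ρ.state (l + m₀) = q' := by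
        intro l
        induction l with
        | zero => rw [Nat.zero_add]
        | succ l ih =>
          have e : l + 1 + m₀ = (l + m₀) + 1 := by omega
          rw [e, (hρstep (l + m₀)).2, ih]
          unfold FTab
          rw [if_neg hm₀]
      have hwin : WinState G k t ui ur up upn q' := by
        refine ⟨fun h => σE (ρ.state 0, (ρ.pref m₀).2 ++ h.2), fun ρ'' hρ'' => ?_⟩
        obtain ⟨h''0, h''step⟩ := hρ''
        set ρg : DPlay Stat (Fin n) Act :=
          ⟨fun j => if j < m₀ then ρ.state j else ρ''.state (j - m₀),
           fun j => if j < m₀ then ρ.eveMove j else ρ''.eveMove (j - m₀),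
           fun j => if j < m₀ then ρ.adamMove j else ρ''.adamMove (j - m₀)⟩ with hρg
        have hshift : ρg.shift m₀ = ρ'' := by
          unfold DPlay.shift
          cases ρ''
          simp only [hρg, DPlay.mk.injEq]
          refine ⟨?_, ?_, ?_⟩ <;> funext l <;>
            simp only [if_neg (by omega : ¬ l + m₀ < m₀), Nat.add_sub_cancel]
        have hgs : ∀ l ≤ m₀, ρg.state l = ρ.state l := by
          intro l hl
          rcases Nat.lt_or_ge l m₀ with hl' | hl'
          · show (if l < m₀ then _ else _) = _
            rw [if_pos hl']
          · have hlm : l = m₀ := le_antisymm hl hl'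
            subst hlm
            show (if m₀ < m₀ then _ else _) = _
            rw [if_neg (lt_irrefl m₀), Nat.sub_self, h''0, hq']
        have hge : ∀ l < m₀, ρg.eveMove l = ρ.eveMove l := fun l hl => if_pos hl
        have hga : ∀ l < m₀, ρg.adamMove l = ρ.adamMove l := fun l hl => if_pos hl
        have hgpref : ∀ j ≤ m₀, ρg.pref j = ρ.pref j := fun j hj =>
          pref_congr (fun l hl => hgs l (le_trans hl hj))
            (fun l hl => hge l (lt_of_lt_of_le hl hj)) (fun l hl => hga l (lt_of_lt_of_le hl hj))
        have hgplay : IsTabPlayFrom (DTab G) (s, D) σE ρg := by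
          refine ⟨?_, fun j => ⟨?_, ?_⟩⟩
          · rw [hgs 0 (Nat.zero_le _), hρ0]
          · rcases lt_or_ge j m₀ with hj | hj
            · rw [hge j hj, hgpref j hj.le]
              exact (hρstep j).1
            · obtain ⟨l, rfl⟩ : ∃ l, j = m₀ + l := ⟨j - m₀, by omega⟩
              have e1 : ρg.eveMove (m₀ + l) = ρ''.eveMove l := by
                show (if m₀ + l < m₀ then _ else _) = _
                rw [if_neg (by omega), Nat.add_sub_cancel_left]
              rw [e1, (h''step l).1, pref_add ρg m₀ l, hshift, hgpref m₀ le_rfl, hgs 0 (Nat.zero_le _)]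
          · rcases lt_or_ge j m₀ with hj | hj
            · rw [hgs (j+1) (by omega), hgs j (by omega), hge j hj, hga j hj, (hρstep j).2]
              unfold FTab
              rw [if_pos (hmin j hj)]
            · obtain ⟨l, rfl⟩ : ∃ l, j = m₀ + l := ⟨j - m₀, by omega⟩
              have e1 : ρg.state (m₀ + l + 1) = ρ''.state (l + 1) := by
                show (if m₀ + l + 1 < m₀ then _ else _) = _
                rw [if_neg (by omega)]
                congr 1
                omega
              have e2 : ρg.state (m₀ + l) = ρ''.state l := by
                show (if m₀ + l < m₀ then _ else _) = _
                rw [if_neg (by omega), Nat.add_sub_cancel_left]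
              have e3 : ρg.eveMove (m₀ + l) = ρ''.eveMove l := by
                show (if m₀ + l < m₀ then _ else _) = _
                rw [if_neg (by omega), Nat.add_sub_cancel_left]
              have e4 : ρg.adamMove (m₀ + l) = ρ''.adamMove l := by
                show (if m₀ + l < m₀ then _ else _) = _
                rw [if_neg (by omega), Nat.add_sub_cancel_left]
              rw [e1, e2, e3, e4]
              exact (h''step l).2
        intro i
        obtain ⟨h1, h2, h3, h4⟩ := hσ ρg hgplay i
        have e1 : MP (vImm G t i) ρ'' = MP (vImm G t i) ρg := by
          rw [← hshift]; exact MP_shift (abs_vImm_le G t i) ρg m₀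
        have e2 : MPSup (vRes G k i) ρ'' = MPSup (vRes G k i) ρg := by
          rw [← hshift]; exact MPSup_shift (abs_vRes_le G k i) ρg m₀
        have e3 : MP (vPay G i) ρ'' = MP (vPay G i) ρg := by
          rw [← hshift]; exact MP_shift (abs_vPay_le G i) ρg m₀
        have e4 : MPSup (vPayNeg G i) ρ'' = MPSup (vPayNeg G i) ρg := by
          rw [← hshift]; exact MPSup_shift (abs_vPayNeg_le G i) ρg m₀
        exact ⟨by rw [e1]; exact h1, by rw [e2]; exact h2, by rw [e3]; exact h3,
          by rw [e4]; exact h4⟩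
      -- thresholds for ρ itself: constant winning tail
      intro i
      have hWq : ∀ base : DState Stat (Fin n) → ℤ,
          (vf G D base (WinState G k t ui ur up upn) q' : ℝ) = (Wmax G : ℝ) := by
        intro base
        unfold vf
        rw [if_neg hm₀, if_pos hwin]
      refine ⟨?_, ?_, ?_, ?_⟩
      · rw [(MP_const_tail (abs_vf_le G D _ (abs_vImm_le G t i)) hconst).1, hWq]
        exact le_trans (le_abs_self _) (hu i).1
      · rw [(MP_const_tail (abs_vf_le G D _ (abs_vRes_le G k i)) hconst).2, hWq]
        exact le_trans (le_abs_self _) (hu i).2.1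
      · rw [(MP_const_tail (abs_vf_le G D _ (abs_vPay_le G i)) hconst).1, hWq]
        exact le_trans (le_abs_self _) (hu i).2.2.1
      · rw [(MP_const_tail (abs_vf_le G D _ (abs_vPayNeg_le G i)) hconst).2, hWq]
        exact le_trans (le_abs_self _) (hu i).2.2.2
    · -- no deviation ever
      push_neg at hbad
      have hD : IsTabPlayFrom (DTab G) (s, D) σE ρ := by
        refine ⟨hρ0, fun j => ⟨(hρstep j).1, ?_⟩⟩
        rw [(hρstep j).2]
        unfold FTab
        rw [if_pos (hbad j)]
      intro i
      obtain ⟨h1, h2, h3, h4⟩ := hσ ρ hD i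
      have hc : ∀ base : DState Stat (Fin n) → ℤ, ∀ l,
          base (ρ.state l) = vf G D base (WinState G k t ui ur up upn) (ρ.state l) := by
        intro base l
        unfold vf
        rw [if_pos (hbad l)]
      exact ⟨by rw [← MP_congr (hc (vImm G t i))]; exact h1,
        by rw [← MPSup_congr (hc (vRes G k i))]; exact h2,
        by rw [← MP_congr (hc (vPay G i))]; exact h3,
        by rw [← MPSup_congr (hc (vPayNeg G i))]; exact h4⟩
  · -- backward direction
    rintro ⟨τ, hτ⟩
    classical
    set σw : DState Stat (Fin n) → EveStrategy Stat (Fin n) Act := fun q =>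
      if hq : EnsuresFrom (DTab G) q (vImm G t) (vRes G k) (vPay G) (vPayNeg G) ui ur up upn
      then Classical.choose hq else fun _ => τ ((s, D), []) with hσw
    refine ⟨backStrat D τ σw, fun ρ hρ => ?_⟩
    obtain ⟨hρ0, hρstep⟩ := hρ
    by_cases hbad : ∃ j, (ρ.state j).2 ≠ D
    · -- a deviation occurs at some point
      have h0D : (ρ.state 0).2 = D := by rw [hρ0]
      set m₀ := Nat.find hbad with hm₀def
      have hm₀ : (ρ.state m₀).2 ≠ D := Nat.find_spec hbad
      have hmin : ∀ j < m₀, (ρ.state j).2 = D := fun j hj => not_not.mp (Nat.find_min hbad hj)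
      have hm₀pos : 0 < m₀ := Nat.pos_of_ne_zero (fun h => hm₀ (h ▸ h0D))
      set q' := ρ.state m₀ with hq'
      -- the fixed-coalition shadow play ρF
      set st : ℕ → DState Stat (Fin n) := fun j => ρ.state (min j m₀) with hst
      set ρF : DPlay Stat (Fin n) Act :=
        ⟨st, eveF τ st ρ.adamMove ρ.eveMove m₀, ρ.adamMove⟩ with hρF
      have hFpref : ∀ j, ρF.pref j = (st 0, buildHist τ st ρ.adamMove ρ.eveMove m₀ j) := by
        intro j
        rw [DPlay.pref, buildHist_eq]
      have hFagree : ∀ j ≤ m₀, ρF.pref j = ρ.pref j := by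
        intro j hj
        refine pref_congr (fun l hl => ?_) (fun l hl => ?_) (fun l _ => rfl)
        · show ρ.state (min l m₀) = ρ.state l
          rw [min_eq_left (le_trans hl hj)]
        · show eveF τ st ρ.adamMove ρ.eveMove m₀ l = ρ.eveMove l
          rw [eveF, if_pos (lt_of_lt_of_le hl hj)]
      have hτgood : ∀ j < m₀, backStrat D τ σw (ρ.pref j) = τ (ρ.pref j) := fun j hj =>
        backStrat_eval_good D τ σw ρ j (fun l hl => hmin l (lt_of_le_of_lt hl hj))
      have hFplay : IsTabPlayFrom (FTab G D) (s, D) τ ρF := by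
        refine ⟨?_, fun j => ⟨?_, ?_⟩⟩
        · show ρ.state (min 0 m₀) = (s, D)
          rw [min_eq_left (Nat.zero_le _)]
          exact hρ0
        · show eveF τ st ρ.adamMove ρ.eveMove m₀ j = _
          rcases Nat.lt_or_ge j m₀ with hj | hj
          · rw [eveF, if_pos hj, hFagree j hj.le, ← hτgood j hj]
            exact (hρstep j).1
          · rw [eveF, if_neg (Nat.not_lt.mpr hj), hFpref j]
        · show st (j+1) = FTab G D (st j) (eveF τ st ρ.adamMove ρ.eveMove m₀ j) (ρ.adamMove j)
          rcases Nat.lt_or_ge j m₀ with hj | hj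
          · have e1 : st (j+1) = ρ.state (j+1) := by
              show ρ.state (min (j+1) m₀) = _
              rw [min_eq_left (by omega)]
            have e2 : st j = ρ.state j := by
              show ρ.state (min j m₀) = _
              rw [min_eq_left (by omega)]
            have e3 : eveF τ st ρ.adamMove ρ.eveMove m₀ j = ρ.eveMove j := by
              rw [eveF, if_pos hj]
            rw [e1, e2, e3, (hρstep j).2]
            unfold FTab
            rw [if_pos (hmin j hj)]
          · have e1 : st (j+1) = q' := by
              show ρ.state (min (j+1) m₀) = _
              rw [min_eq_right (by omega)]
            have e2 : st j = q' := by
              show ρ.state (min j m₀) = _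
              rw [min_eq_right (by omega)]
            rw [e1, e2]
            unfold FTab
            rw [if_neg hm₀]
      have hFtail : ∀ l, ρF.state (l + m₀) = q' := by
        intro l
        show ρ.state (min (l + m₀) m₀) = _
        rw [min_eq_right (by omega)]
      -- the reached state must be winning
      have hwin : EnsuresFrom (DTab G) q' (vImm G t) (vRes G k) (vPay G) (vPayNeg G)
          ui ur up upn := by
        by_contra hnw
        have i0 : Fin n := ⟨0, hn⟩
        obtain ⟨h1, -, -, -⟩ := hτ ρF hFplay ⟨0, hn⟩
        have hval : ((vf G D (vImm G t ⟨0, hn⟩) (WinState G k t ui ur up upn) q' : ℤ) : ℝ)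
            = -(Wmax G : ℝ) - 1 := by
          have hnw' : ¬ WinState G k t ui ur up upn q' := hnw
          unfold vf
          rw [if_neg hm₀, if_neg hnw']
          push_cast
          ring
        rw [(MP_const_tail (abs_vf_le G D _ (abs_vImm_le G t ⟨0, hn⟩)) hFtail).1, hval] at h1
        have hlow := (abs_le.mp (hu ⟨0, hn⟩).1).1
        linarith
      have hσwq : σw q' = Classical.choose hwin := by
        rw [hσw]
        exact dif_pos hwin
      have hshift_play : IsTabPlayFrom (DTab G) q' (Classical.choose hwin) (ρ.shift m₀) := by
        refine ⟨?_, fun l => ⟨?_, ?_⟩⟩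
        · show ρ.state (0 + m₀) = q'
          rw [Nat.zero_add]
        · show ρ.eveMove (l + m₀) = _
          have e : l + m₀ = m₀ + l := Nat.add_comm l m₀
          rw [e, (hρstep (m₀ + l)).1, backStrat_eval_bad D τ σw ρ m₀ l hm₀ hmin, hσwq]
        · show ρ.state (l + 1 + m₀) = _
          have e : l + 1 + m₀ = (l + m₀) + 1 := by omega
          rw [e]
          exact (hρstep (l + m₀)).2
      have hth := Classical.choose_spec hwin (ρ.shift m₀) hshift_play
      intro i
      obtain ⟨h1, h2, h3, h4⟩ := hth i
      refine ⟨?_, ?_, ?_, ?_⟩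
      · rw [← MP_shift (abs_vImm_le G t i) ρ m₀]; exact h1
      · rw [← MPSup_shift (abs_vRes_le G k i) ρ m₀]; exact h2
      · rw [← MP_shift (abs_vPay_le G i) ρ m₀]; exact h3
      · rw [← MPSup_shift (abs_vPayNeg_le G i) ρ m₀]; exact h4
    · -- no deviation ever
      push_neg at hbad
      have hτev : ∀ j, backStrat D τ σw (ρ.pref j) = τ (ρ.pref j) := fun j =>
        backStrat_eval_good D τ σw ρ j (fun l _ => hbad l)
      have hF : IsTabPlayFrom (FTab G D) (s, D) τ ρ := by
        refine ⟨hρ0, fun j => ⟨?_, ?_⟩⟩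
        · rw [← hτev j]
          exact (hρstep j).1
        · rw [(hρstep j).2]
          unfold FTab
          rw [if_pos (hbad j)]
      intro i
      obtain ⟨h1, h2, h3, h4⟩ := hτ ρ hF i
      have hc : ∀ base : DState Stat (Fin n) → ℤ, ∀ l,
          vf G D base (WinState G k t ui ur up upn) (ρ.state l) = base (ρ.state l) := by
        intro base l
        unfold vf
        rw [if_pos (hbad l)]
      exact ⟨by rw [← MP_congr (hc (vImm G t i))]; exact h1,
        by rw [← MPSup_congr (hc (vRes G k i))]; exact h2,
        by rw [← MP_congr (hc (vPay G i))]; exact h3,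
        by rw [← MPSup_congr (hc (vPayNeg G i))]; exact h4⟩
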